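/- arXiv:0709.3735 — 4 statements merged into one kernel-verified Lean document; each statement's English description precedes it below -/
import Mathlib

section
/- Let k be a field and X a set. The k-algebra homomorphisms from the product algebra ∏_{x ∈ X} k to a commutative k-algebra B, which factor through the projection onto a finite subproduct, are in natural bijection with continuous maps from Spec B (with Zariski topology) to X (with discrete topology). -/
/-!
For an algebra map `f : (X → k) →ₐ[k] B` depending on finitely many coordinates, the elements
`e x = f (Pi.single x 1)` are orthogonal idempotents summing to `1`, so the basic opens `D(e x)`
partition `Spec B` into clopen pieces; `p ↦` the unique `x` with `p ∈ D(e x)` is the continuous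
map. Conversely, a continuous map `φ` to a discrete space has finite image and clopen fibres;
each fibre is `D(e x)` for a unique idempotent `e x`, and `g ↦ ∑ x, g x • e x` is an algebra map
inducing `φ`. Since an idempotent is determined by its basic open set, `f` is recovered from the
fibres of the map it induces.
-/

open PrimeSpectrum

section OpenPartition

variable {S X : Type*} [TopologicalSpace S] [TopologicalSpace X] [DiscreteTopology X]
  {U : X → Set S}

noncomputable def ContinuousMap.ofOpenPartition (U : X → Set S) (hU : ∀ x, IsOpen (U x))
    (h : ∀ s, ∃! x, s ∈ U x) : C(S, X) where
  toFun s := (h s).choose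
  continuous_toFun := continuous_discrete_rng.2 fun x => by
    convert hU x using 1
    ext s
    exact (h s).choose_eq_iff

theorem ContinuousMap.ofOpenPartition_apply_eq_iff (hU : ∀ x, IsOpen (U x))
    (h : ∀ s, ∃! x, s ∈ U x) {s : S} {x : X} : ofOpenPartition U hU h s = x ↔ s ∈ U x :=
  (h s).choose_eq_iff

end OpenPartition

section Idempotents

variable {B X : Type*} [CommSemiring B] {e : X → B} {Y : Finset X}

theorem IsIdempotentElem.eq_zero_of_basicOpen_eq_bot {e : B} (he : IsIdempotentElem e)
    (h : basicOpen e = ⊥) : e = 0 :=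
  he.eq_zero_of_isNilpotent (basicOpen_eq_bot_iff e |>.mp h)

theorem OrthogonalIdempotents.existsUnique_mem_basicOpen (he : OrthogonalIdempotents e)
    (hY : ∑ x ∈ Y, e x = 1) (p : PrimeSpectrum B) : ∃! x, p ∈ basicOpen (e x) := by
  obtain ⟨x, hx⟩ : ∃ x, e x ∉ p.asIdeal := by
    by_contra! h
    exact p.isPrime.ne_top <| (Ideal.eq_top_iff_one _).2 <| hY ▸ Ideal.sum_mem _ fun x _ => h x
  refine ⟨x, hx, fun y hy => by_contra fun hyx => ?_⟩
  have : e y * e x ∈ p.asIdeal := he.ortho hyx ▸ p.asIdeal.zero_mem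
  exact (p.isPrime.mem_or_mem this).elim hy hx

end Idempotents

section FiberIdempotents

variable {B X : Type*} [CommRing B] [TopologicalSpace X] [DiscreteTopology X]
  (φ : C(PrimeSpectrum B, X))

noncomputable def ContinuousMap.fiberIdempotent (x : X) : B :=
  (isIdempotentElemEquivClopens.symm
    ⟨φ ⁻¹' {x}, (isClopen_discrete {x}).preimage φ.continuous⟩).1

theorem ContinuousMap.basicOpen_fiberIdempotent (x : X) :
    (basicOpen (φ.fiberIdempotent x) : Set (PrimeSpectrum B)) = φ ⁻¹' {x} :=
  congrArg SetLike.coe (basicOpen_isIdempotentElemEquivClopens_symm _)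

theorem ContinuousMap.orthogonalIdempotents_fiberIdempotent :
    OrthogonalIdempotents φ.fiberIdempotent := by
  have idem x : IsIdempotentElem (φ.fiberIdempotent x) :=
    (isIdempotentElemEquivClopens.symm _).2
  refine ⟨idem, fun x y hxy => ((idem x).mul (idem y)).eq_zero_of_basicOpen_eq_bot ?_⟩
  rw [basicOpen_mul]
  refine TopologicalSpace.Opens.ext ?_
  simp only [TopologicalSpace.Opens.coe_inf, basicOpen_fiberIdempotent,
    TopologicalSpace.Opens.coe_bot]
  exact Set.disjoint_iff_inter_eq_empty.1 <|
    (Set.disjoint_singleton.2 hxy).preimage φ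

theorem ContinuousMap.sum_fiberIdempotent {T : Finset X} (hT : Set.range φ ⊆ T) :
    ∑ x ∈ T, φ.fiberIdempotent x = 1 := by
  have he := φ.orthogonalIdempotents_fiberIdempotent
  refine basicOpen_injOn_isIdempotentElem he.isIdempotentElem_sum .one ?_
  rw [basicOpen_one, eq_top_iff]
  intro p _ hp
  have hmem : p ∈ basicOpen (φ.fiberIdempotent (φ p)) := by
    rw [← SetLike.mem_coe, basicOpen_fiberIdempotent]; rfl
  exact hmem <| he.mul_sum_of_mem (hT ⟨p, rfl⟩) ▸ p.asIdeal.mul_mem_left _ hp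

end FiberIdempotents

section PiAlgHom

variable {k B X : Type*} [CommSemiring k] [Semiring B] [Algebra k B] {e : X → B} {Y : Finset X}

theorem OrthogonalIdempotents.eq_zero_of_notMem (he : OrthogonalIdempotents e)
    (hY : ∑ x ∈ Y, e x = 1) {x : X} (hx : x ∉ Y) : e x = 0 := by
  simpa [hY] using he.mul_sum_of_notMem hx

variable (k) in
noncomputable def OrthogonalIdempotents.piAlgHom (he : OrthogonalIdempotents e)
    (hY : ∑ x ∈ Y, e x = 1) : (X → k) →ₐ[k] B where
  toFun g := ∑ x ∈ Y, g x • e x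
  map_one' := by simpa using hY
  map_mul' g h := by
    classical
    simp [Finset.sum_mul_sum, he.mul_eq, smul_smul, mul_comm]
  map_zero' := by simp
  map_add' g h := by simp [add_smul, Finset.sum_add_distrib]
  commutes' r := by simp [Algebra.algebraMap_eq_smul_one, ← Finset.smul_sum, hY]

theorem OrthogonalIdempotents.piAlgHom_dependsOn (he : OrthogonalIdempotents e)
    (hY : ∑ x ∈ Y, e x = 1) : DependsOn (he.piAlgHom k hY) Y :=
  fun g h hgh => Finset.sum_congr rfl fun x hx => by rw [hgh x hx]

theorem OrthogonalIdempotents.piAlgHom_single_one [DecidableEq X]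
    (he : OrthogonalIdempotents e) (hY : ∑ x ∈ Y, e x = 1) (x : X) :
    he.piAlgHom k hY (Pi.single x 1) = e x := by
  show ∑ y ∈ Y, (Pi.single x 1 : X → k) y • e y = e x
  by_cases hx : x ∈ Y
  · simp [Pi.single_apply, hx]
  · simp [Pi.single_apply, hx, he.eq_zero_of_notMem hY hx]

end PiAlgHom

theorem Pi.orthogonalIdempotents_single_one {R X : Type*} [Semiring R] [DecidableEq X] :
    OrthogonalIdempotents (fun x : X => (Pi.single x 1 : X → R)) where
  idem x := by simp [IsIdempotentElem, ← Pi.single_mul]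
  ortho x y hxy := by
    ext z
    by_cases hz : x = z
    · subst hz; simp [hxy]
    · simp [Pi.single_apply, hz]

section DependsOn

variable {k B X : Type*} [CommSemiring k] [Semiring B] [Algebra k B] [DecidableEq X]
  {Y : Finset X}

theorem AlgHom.orthogonalIdempotents_apply_single_one (f : (X → k) →ₐ[k] B) :
    OrthogonalIdempotents (fun x => f (Pi.single x 1)) :=
  Pi.orthogonalIdempotents_single_one.map f.toRingHom

theorem AlgHom.apply_eq_sum_smul_of_dependsOn {f : (X → k) →ₐ[k] B} (hf : DependsOn f Y)
    (g : X → k) : f g = ∑ x ∈ Y, g x • f (Pi.single x 1) := by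
  calc f g = f (∑ x ∈ Y, g x • Pi.single x 1) :=
        hf fun y hy => by simp [Pi.single_apply, Finset.mem_coe.mp hy]
    _ = _ := by simp only [map_sum, map_smul]

theorem AlgHom.sum_single_one_of_dependsOn {f : (X → k) →ₐ[k] B} (hf : DependsOn f Y) :
    ∑ x ∈ Y, f (Pi.single x 1) = 1 := by
  simpa using (f.apply_eq_sum_smul_of_dependsOn hf 1).symm

theorem AlgHom.ext_of_dependsOn {f₁ f₂ : (X → k) →ₐ[k] B} (h₁ : DependsOn f₁ Y)
    (h₂ : DependsOn f₂ Y) (h : ∀ x ∈ Y, f₁ (Pi.single x 1) = f₂ (Pi.single x 1)) : f₁ = f₂ :=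
  AlgHom.ext fun g => by
    rw [f₁.apply_eq_sum_smul_of_dependsOn h₁, f₂.apply_eq_sum_smul_of_dependsOn h₂]
    exact Finset.sum_congr rfl fun x hx => by rw [h x hx]

end DependsOn

section SpecMap

variable {k B X : Type*} [CommSemiring k] [CommRing B] [Algebra k B] [DecidableEq X]
  [TopologicalSpace X] [DiscreteTopology X]

noncomputable def AlgHom.specMapOfDependsOn (f : (X → k) →ₐ[k] B)
    (hf : ∃ Y : Finset X, DependsOn f Y) : C(PrimeSpectrum B, X) :=
  .ofOpenPartition (fun x => basicOpen (f (Pi.single x 1))) (fun _ => isOpen_basicOpen) <| by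
    obtain ⟨Y, hY⟩ := hf
    exact f.orthogonalIdempotents_apply_single_one.existsUnique_mem_basicOpen
      (f.sum_single_one_of_dependsOn hY)

theorem AlgHom.specMapOfDependsOn_apply_eq_iff (f : (X → k) →ₐ[k] B)
    (hf : ∃ Y : Finset X, DependsOn f Y) {p : PrimeSpectrum B} {x : X} :
    f.specMapOfDependsOn hf p = x ↔ p ∈ basicOpen (f (Pi.single x 1)) :=
  ContinuousMap.ofOpenPartition_apply_eq_iff _ _

variable (k B X) in
theorem AlgHom.specMapOfDependsOn_injective :
    Function.Injective fun f : {f : (X → k) →ₐ[k] B // ∃ Y : Finset X, DependsOn f Y} =>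
      f.1.specMapOfDependsOn f.2 := by
  rintro ⟨f₁, hf₁⟩ ⟨f₂, hf₂⟩ h
  have ⟨Y₁, h₁⟩ := hf₁
  have ⟨Y₂, h₂⟩ := hf₂
  refine Subtype.ext <| AlgHom.ext_of_dependsOn (Y := Y₁ ∪ Y₂)
    (h₁.mono (by simp)) (h₂.mono (by simp)) fun x _ => ?_
  refine basicOpen_injOn_isIdempotentElem (f₁.orthogonalIdempotents_apply_single_one.idem x)
    (f₂.orthogonalIdempotents_apply_single_one.idem x) (TopologicalSpace.Opens.ext ?_)
  ext p
  rw [SetLike.mem_coe, SetLike.mem_coe, ← specMapOfDependsOn_apply_eq_iff _ hf₁,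
    ← specMapOfDependsOn_apply_eq_iff _ hf₂]
  exact Eq.congr_left (DFunLike.congr_fun h p)

variable (k B X) in
theorem AlgHom.specMapOfDependsOn_surjective :
    Function.Surjective fun f : {f : (X → k) →ₐ[k] B // ∃ Y : Finset X, DependsOn f Y} =>
      f.1.specMapOfDependsOn f.2 := by
  intro φ
  have hT := (isCompact_range φ.continuous).finite_of_discrete.coe_toFinset.ge
  have he := φ.orthogonalIdempotents_fiberIdempotent
  refine ⟨⟨he.piAlgHom k (φ.sum_fiberIdempotent hT), _, he.piAlgHom_dependsOn _⟩, ?_⟩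
  ext p
  rw [specMapOfDependsOn_apply_eq_iff, he.piAlgHom_single_one, ← SetLike.mem_coe,
    φ.basicOpen_fiberIdempotent]
  rfl

end SpecMap

/-- Let `k` be a field and `X` a set. The `k`-algebra homomorphisms from the product
algebra `∏_{x ∈ X} k` to a commutative `k`-algebra `B` which factor through the
projection onto a finite subproduct are in bijection with the continuous maps from
`Spec B` (Zariski topology) to `X` (discrete topology). -/
theorem algHom_pi_equiv_continuous_maps (k : Type) [Field k] (X : Type)
    (B : Type) [CommRing B] [Algebra k B] :
    Nonempty
      ({f : ((X → k) →ₐ[k] B) //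
          ∃ Y : Finset X, ∀ g h : X → k, (∀ x ∈ Y, g x = h x) → f g = f h} ≃
        @ContinuousMap (PrimeSpectrum B) X inferInstance ⊥) := by
  classical
  let : TopologicalSpace X := ⊥
  have : DiscreteTopology X := ⟨rfl⟩
  -- the subtype in the statement is `{f // ∃ Y : Finset X, DependsOn f Y}` with `DependsOn` unfolded
  exact ⟨.ofBijective _ ⟨AlgHom.specMapOfDependsOn_injective k B X,
    AlgHom.specMapOfDependsOn_surjective k B X⟩⟩
end

section
/- Let k be a field and M a commutative monoid. The monoid algebra k[M] is an integral domain and a finitely generated k-algebra if and only if M is a 'classic' monoid: M is finitely generated, its Grothendieck group G is torsion-free, and the canonical map M → G is injective (i.e., M is cancellative). -/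
/-!
If `k[M]` is a domain, the monomials are non-zero divisors, so `M` is cancellative. For
torsion-freeness take `n` minimal with `aⁿ = bⁿ`: minimality makes the monomials `aⁱ bⁿ⁻¹⁻ⁱ`,
`i < n`, pairwise distinct, so `∑ aⁱ bⁿ⁻¹⁻ⁱ` is a non-zero factor of
`(∑ aⁱ bⁿ⁻¹⁻ⁱ) (a - b) = aⁿ - bⁿ = 0`, whence `a = b`.
Conversely a finitely generated cancellative torsion-free commutative monoid embeds into some `ℤʳ`,
hence has unique products, and `k[M]` is a domain (`AffineMonoid.to_twoUniqueProds`).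
In both directions `k[M]` is a finitely generated `k`-algebra exactly when `M` is finitely generated.
-/

open Finset

theorem pow_mul_pow_sub_injOn_Iio {M : Type*} [CommMonoid M] [IsLeftCancelMul M]
    {a b : M} {n : ℕ} (h : ∀ q, 0 < q → q < n → a ^ q ≠ b ^ q) :
    Set.InjOn (fun i => a ^ i * b ^ (n - 1 - i)) (Set.Iio n) := by
  have hne : ∀ i j, i < j → j < n → a ^ i * b ^ (n - 1 - i) ≠ a ^ j * b ^ (n - 1 - j) := by
    intro i j hij hjn heq
    obtain ⟨d, hd, rfl⟩ : ∃ d, 0 < d ∧ j = i + d := ⟨j - i, by omega, by omega⟩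
    refine h d hd (by omega) (mul_left_cancel (a := a ^ i * b ^ (n - 1 - (i + d))) ?_)
    calc a ^ i * b ^ (n - 1 - (i + d)) * a ^ d
        = a ^ (i + d) * b ^ (n - 1 - (i + d)) := by rw [pow_add, mul_right_comm]
      _ = a ^ i * b ^ (n - 1 - (i + d)) * b ^ d := by
        rw [← heq, show n - 1 - i = n - 1 - (i + d) + d by omega, pow_add, mul_assoc]
  intro i hi j hj hij
  rcases lt_trichotomy i j with hlt | heq | hgt
  · exact absurd hij (hne i j hlt hj)
  · exact heq
  · exact absurd hij.symm (hne j i hgt hi)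

namespace MonoidAlgebra

variable {k M : Type*}

theorem isLeftCancelMul_of_isLeftCancelMulZero [Semiring k] [Nontrivial k] [Monoid M]
    [IsLeftCancelMulZero (MonoidAlgebra k M)] : IsLeftCancelMul M where
  mul_left_cancel a b c h := of_injective (R := k) <| mul_left_cancel₀ (a := of k M a)
    (by simp [of_apply]) (by simpa only [← map_mul] using congrArg (of k M) h)

theorem sum_single_one_ne_zero [Semiring k] [Nontrivial k] {ι : Type*} {s : Finset ι}
    {f : ι → M} (hs : s.Nonempty) (hf : Set.InjOn f s) :
    ∑ i ∈ s, single (f i) (1 : k) ≠ 0 := by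
  classical
  obtain ⟨i₀, hi₀⟩ := hs
  intro h
  have hcoeff := congrArg (fun x : MonoidAlgebra k M => x.coeff (f i₀)) h
  simp only [coeff_sum, coeff_single, Finsupp.finsetSum_apply, Finsupp.single_apply, coeff_zero,
    Finsupp.coe_zero, Pi.zero_apply] at hcoeff
  rw [Finset.sum_eq_single_of_mem i₀ hi₀ fun i hi hne => if_neg fun heq => hne (hf hi hi₀ heq),
    if_pos rfl] at hcoeff
  exact one_ne_zero hcoeff

theorem isMulTorsionFree_of_isDomain [CommRing k] [Nontrivial k] [CommMonoid M]
    [IsDomain (MonoidAlgebra k M)] : IsMulTorsionFree M := by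
  have := isLeftCancelMul_of_isLeftCancelMulZero (k := k) (M := M)
  refine ⟨fun n hn a b hab => ?_⟩
  simp only at hab
  induction n using Nat.strong_induction_on with
  | _ n ih =>
  by_cases hsmaller : ∃ q, 0 < q ∧ q < n ∧ a ^ q = b ^ q
  · obtain ⟨q, hq, hqn, habq⟩ := hsmaller
    exact ih q hqn hq.ne' habq
  push Not at hsmaller
  have hgeom :
      (∑ i ∈ range n, single (a ^ i * b ^ (n - 1 - i)) (1 : k)) * (of k M a - of k M b) = 0 := by
    simp only [← of_apply, map_mul, map_pow]
    rw [geom_sum₂_mul, ← map_pow, ← map_pow, hab, sub_self]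
  have hsum := sum_single_one_ne_zero (k := k) (nonempty_range_iff.2 hn)
    (by simpa using pow_mul_pow_sub_injOn_Iio hsmaller)
  exact of_injective (sub_eq_zero.1 ((mul_eq_zero.1 hgeom).resolve_left hsum))

end MonoidAlgebra

/-- Let `k` be a field and `M` a commutative monoid. The monoid algebra `k[M]` is an
integral domain and a finitely generated `k`-algebra if and only if `M` is a
"classic" monoid: `M` is finitely generated, cancellative (so that the canonical map
to its Grothendieck group `G` is injective), and `G` is torsion-free (which, for a
cancellative commutative monoid, amounts to `a^n = b^n → a = b` for `n > 0`). -/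
theorem monoidAlgebra_isDomain_finiteType_iff_classic (k M : Type) [Field k]
    [CommMonoid M] :
    (IsDomain (MonoidAlgebra k M) ∧ Algebra.FiniteType k (MonoidAlgebra k M)) ↔
      (Monoid.FG M ∧ (∀ a b c : M, a * b = a * c → b = c) ∧
        ∀ (a b : M) (n : ℕ), 0 < n → a ^ n = b ^ n → a = b) := by
  constructor
  · rintro ⟨hdom, hft⟩
    have := MonoidAlgebra.isLeftCancelMul_of_isLeftCancelMulZero (k := k) (M := M)
    have := MonoidAlgebra.isMulTorsionFree_of_isDomain (k := k) (M := M)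
    exact ⟨MonoidAlgebra.finiteType_iff_fg.1 hft, fun a b c => mul_left_cancel,
      fun a b n hn h => IsMulTorsionFree.pow_left_injective hn.ne' h⟩
  · rintro ⟨hfg, hcancel, htf⟩
    let _ : CancelCommMonoid M := { ‹CommMonoid M› with mul_left_cancel a b c h := hcancel a b c h }
    have : IsMulTorsionFree M := ⟨fun n hn a b => htf a b n (Nat.pos_of_ne_zero hn)⟩
    exact ⟨inferInstance, MonoidAlgebra.finiteType_iff_fg.2 hfg⟩
end

section
/- Let k be a field of characteristic zero and B a commutative k-algebra. For each nilpotent element n ∈ B and all α, β ∈ B, with exp(α n) = ∑_{i≥0} α^i n^i / i!, we have exp((α+β)n) = exp(αn)·exp(βn), and exp(αn) is a unit of B. -/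
/-- The exponential of a nilpotent element of a commutative algebra `B` over a field
`k` of characteristic zero: the finite sum `exp x = ∑ᵢ xⁱ/i!`. -/
noncomputable def expNil (k : Type) [Field k] {B : Type} [CommRing B] [Algebra k B]
    (x : B) : B :=
  ∑ᶠ i : ℕ, ((i.factorial : k)⁻¹) • x ^ i

lemma expNil_eq_sum (k : Type) [Field k] {B : Type} [CommRing B] [Algebra k B]
    (x : B) (N : ℕ) (hx : x ^ N = 0) :
    expNil k x = ∑ i ∈ Finset.range N, ((i.factorial : k)⁻¹) • x ^ i := by
  apply finsum_eq_finset_sum_of_support_subset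
  intro i hi
  simp only [Function.mem_support] at hi
  by_contra h
  simp only [Finset.coe_range, Set.mem_Iio, not_lt] at h
  apply hi
  rw [← Nat.add_sub_cancel' h, pow_add, hx, zero_mul, smul_zero]

lemma expNil_add (k : Type) [Field k] [CharZero k] {B : Type} [CommRing B] [Algebra k B]
    (x y : B) (N : ℕ)
    (h : ∀ i j : ℕ, N ≤ i + j → x ^ i * y ^ j = 0) :
    expNil k (x + y) = expNil k x * expNil k y := by
  have hx : x ^ N = 0 := by simpa using h N 0 (by simp)
  have hy : y ^ N = 0 := by simpa using h 0 N (by simp)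
  have hxy : (x + y) ^ N = 0 := by
    rw [add_pow]
    refine Finset.sum_eq_zero fun i hi => ?_
    rw [h i (N - i) (by simp at hi; omega), zero_mul]
  rw [expNil_eq_sum k x N hx, expNil_eq_sum k y N hy, expNil_eq_sum k _ N hxy]
  rw [Finset.sum_mul_sum]
  have key : ∀ m ∈ Finset.range N,
      ((m.factorial : k)⁻¹) • (x + y) ^ m =
        ∑ i ∈ Finset.range (m + 1),
          (((i.factorial : k)⁻¹) * (((m - i).factorial : k)⁻¹)) • (x ^ i * y ^ (m - i)) := by
    intro m _
    rw [add_pow, Finset.smul_sum]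
    refine Finset.sum_congr rfl fun i hi => ?_
    simp only [Finset.mem_range, Nat.lt_succ_iff] at hi
    have hc : ((m.factorial : k)⁻¹) * (m.choose i : k) =
        ((i.factorial : k)⁻¹) * (((m - i).factorial : k)⁻¹) := by
      have h2 : ((m.choose i : k)) * (i.factorial : k) * ((m - i).factorial : k)
          = (m.factorial : k) := by
        exact_mod_cast congrArg (Nat.cast : ℕ → k) (Nat.choose_mul_factorial_mul_factorial hi)
      have e1 : (i.factorial : k) ≠ 0 := Nat.cast_ne_zero.2 i.factorial_ne_zero
      have e2 : ((m - i).factorial : k) ≠ 0 := Nat.cast_ne_zero.2 (m - i).factorial_ne_zero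
      have e3 : (m.factorial : k) ≠ 0 := Nat.cast_ne_zero.2 m.factorial_ne_zero
      field_simp
      linear_combination h2
    calc ((m.factorial : k)⁻¹) • (x ^ i * y ^ (m - i) * (m.choose i : B))
        = (((m.factorial : k)⁻¹) * (m.choose i : k)) • (x ^ i * y ^ (m - i)) := by
          rw [mul_smul, Algebra.smul_def (m.choose i : k), map_natCast]
          ring_nf
      _ = _ := by rw [hc]
  rw [Finset.sum_congr rfl key, Finset.sum_range_diag_flip N
    (fun i j => (((i.factorial : k)⁻¹) * (((j).factorial : k)⁻¹)) • (x ^ i * y ^ j))]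
  refine Finset.sum_congr rfl fun i hi => ?_
  rw [Finset.sum_subset (Finset.range_subset_range.2 (Nat.sub_le N i))]
  · refine Finset.sum_congr rfl fun j _ => ?_
    rw [smul_mul_smul_comm]
  · intro j hj hj'
    simp only [Finset.mem_range, not_lt] at hj hj'
    rw [h i j (by omega), smul_zero]

/-- Let `k` be a field of characteristic zero, `B` a commutative `k`-algebra and
`n ∈ B` nilpotent. Then `α ↦ exp(α n)` is a homomorphism from the additive group
`(B, +)` to the group of units `B^×`: `exp((α+β)n) = exp(αn) · exp(βn)`, and each
`exp(αn)` is a unit. -/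
theorem expNil_hom_of_nilpotent (k B : Type) [Field k] [CharZero k] [CommRing B]
    [Algebra k B] (n : B) (hn : IsNilpotent n) :
    (∀ α β : B, expNil k ((α + β) * n) = expNil k (α * n) * expNil k (β * n)) ∧
    ∀ α : B, IsUnit (expNil k (α * n)) := by
  obtain ⟨N, hN⟩ := hn
  have key : ∀ a b : B, ∀ i j : ℕ, N ≤ i + j → (a * n) ^ i * (b * n) ^ j = 0 := by
    intro a b i j hij
    have : n ^ (i + j) = 0 := by
      rw [← Nat.add_sub_cancel' hij, pow_add, hN, zero_mul]
    rw [mul_pow, mul_pow, mul_mul_mul_comm, ← pow_add, this, mul_zero]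
  have hadd : ∀ a b : B, expNil k ((a + b) * n) = expNil k (a * n) * expNil k (b * n) := by
    intro a b
    rw [add_mul]
    exact expNil_add k (a * n) (b * n) N (key a b)
  refine ⟨hadd, fun α => ?_⟩
  refine IsUnit.of_mul_eq_one (expNil k (-α * n)) ?_
  rw [← hadd, add_neg_cancel, zero_mul]
  have h0 : (0 : B) ^ 1 = 0 := by simp
  rw [expNil_eq_sum k 0 1 h0]
  simp
end

section
/- The category of diagonalizable affine algebraic groups over a field k is anti-equivalent to the category of finitely generated abelian groups, via M ↦ Spec k[M] (where k[M] is the group Hopf algebra) and G ↦ the group of characters Hom(G, G_m); in particular Hom-sets correspond: group scheme homomorphisms Spec k[M] → Spec k[N] are in natural bijection with group homomorphisms N → M. -/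
/-!
A bialgebra map `k[N] → k[M]` sends group-like elements to group-like elements. Over a domain the
group-like elements of `k[M]` are exactly the elements of `M`, since distinct group-like elements
are linearly independent; so such a map restricts to a group homomorphism `N → M`, which
determines it because `N` spans `k[N]`. Mathlib packages this as
`MonoidAlgebra.mapDomainBialgHomEquiv`; it remains to recognise `groupAlgComul` and
`groupAlgCounit` as the comultiplication and counit of Mathlib's bialgebra structure on `k[M]`.
-/

open TensorProduct

set_option maxHeartbeats 1000000
set_option synthInstance.maxHeartbeats 200000

/-- The comultiplication of the group Hopf algebra `k[M]`, making the elements of `M`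
group-like: `m ↦ m ⊗ m`. -/
noncomputable def groupAlgComul (k M : Type) [CommRing k] [CommMonoid M] :
    MonoidAlgebra k M →ₐ[k] (MonoidAlgebra k M ⊗[k] MonoidAlgebra k M) :=
  MonoidAlgebra.lift k _ M
    { toFun := fun m => (MonoidAlgebra.of k M m) ⊗ₜ[k] (MonoidAlgebra.of k M m)
      map_one' := by
        show (MonoidAlgebra.of k M) 1 ⊗ₜ[k] (MonoidAlgebra.of k M) 1 = 1
        rw [map_one, Algebra.TensorProduct.one_def]
      map_mul' := by
        intro a b
        rw [Algebra.TensorProduct.tmul_mul_tmul, ← map_mul] }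

/-- The counit of the group Hopf algebra `k[M]`: the algebra map `m ↦ 1`. -/
noncomputable def groupAlgCounit (k M : Type) [CommRing k] [CommMonoid M] :
    MonoidAlgebra k M →ₐ[k] k :=
  MonoidAlgebra.lift k k M (1 : M →* k)

open Bialgebra

namespace BialgHom

variable {R A B : Type*} [CommSemiring R] [Semiring A] [Semiring B] [Bialgebra R A]
  [Bialgebra R B]

def equivCompatibleAlgHom : (A →ₐc[R] B) ≃
    {f : A →ₐ[R] B //
      (∀ a, comulAlgHom R B (f a) = Algebra.TensorProduct.map f f (comulAlgHom R A a)) ∧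
        ∀ a, counitAlgHom R B (f a) = counitAlgHom R A a} where
  toFun f := ⟨f, fun a => (DFunLike.congr_fun f.map_comp_comulAlgHom a).symm,
    DFunLike.congr_fun f.counitAlgHom_comp⟩
  invFun f := ofAlgHom f.1 (AlgHom.ext f.2.2) (AlgHom.ext fun a => (f.2.1 a).symm)
  left_inv _ := rfl
  right_inv _ := rfl

end BialgHom

theorem groupAlgComul_eq_comulAlgHom (k M : Type) [CommRing k] [CommMonoid M] :
    groupAlgComul k M = comulAlgHom k (MonoidAlgebra k M) := by
  ext m; simp [groupAlgComul]

theorem groupAlgCounit_eq_counitAlgHom (k M : Type) [CommRing k] [CommMonoid M] :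
    groupAlgCounit k M = counitAlgHom k (MonoidAlgebra k M) := by
  ext m; simp [groupAlgCounit]

theorem diagonalizable_antiequivalence_general (k M N : Type) [Field k]
    [CommGroup M] [CommGroup N] :
    ∃ e : {f : MonoidAlgebra k N →ₐ[k] MonoidAlgebra k M //
        (∀ a : MonoidAlgebra k N,
          groupAlgComul k M (f a) = (Algebra.TensorProduct.map f f) (groupAlgComul k N a)) ∧
        ∀ a : MonoidAlgebra k N, groupAlgCounit k M (f a) = groupAlgCounit k N a} ≃
      (N →* M),
      ∀ (f : {f : MonoidAlgebra k N →ₐ[k] MonoidAlgebra k M //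
          (∀ a : MonoidAlgebra k N,
            groupAlgComul k M (f a) = (Algebra.TensorProduct.map f f) (groupAlgComul k N a)) ∧
          ∀ a : MonoidAlgebra k N, groupAlgCounit k M (f a) = groupAlgCounit k N a})
        (n : N),
        f.1 (MonoidAlgebra.of k N n) = MonoidAlgebra.of k M (e f n) := by
  rw [groupAlgComul_eq_comulAlgHom, groupAlgComul_eq_comulAlgHom, groupAlgCounit_eq_counitAlgHom,
    groupAlgCounit_eq_counitAlgHom]
  refine ⟨BialgHom.equivCompatibleAlgHom.symm.trans MonoidAlgebra.mapDomainBialgHomEquiv.symm,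
    fun f n => ?_⟩
  exact (MonoidAlgebra.single_mapDomainOfBialgHom
    (BialgHom.equivCompatibleAlgHom.symm f) n (1 : k)).symm

/-- Anti-equivalence between diagonalizable groups and finitely generated abelian
groups, on Hom-sets: for a field `k` and finitely generated abelian groups `M, N`,
group scheme homomorphisms `Spec k[M] → Spec k[N]`, i.e. Hopf algebra homomorphisms
`k[N] → k[M]`, are in natural bijection with group homomorphisms `N → M` (the
bijection matching `f` with the group homomorphism it induces on the group-like
elements). -/
theorem diagonalizable_antiequivalence (k M N : Type) [Field k]
    [CommGroup M] [Group.FG M] [CommGroup N] [Group.FG N] :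
    ∃ e : {f : MonoidAlgebra k N →ₐ[k] MonoidAlgebra k M //
        (∀ a : MonoidAlgebra k N,
          groupAlgComul k M (f a) = (Algebra.TensorProduct.map f f) (groupAlgComul k N a)) ∧
        ∀ a : MonoidAlgebra k N, groupAlgCounit k M (f a) = groupAlgCounit k N a} ≃
      (N →* M),
      ∀ (f : {f : MonoidAlgebra k N →ₐ[k] MonoidAlgebra k M //
          (∀ a : MonoidAlgebra k N,
            groupAlgComul k M (f a) = (Algebra.TensorProduct.map f f) (groupAlgComul k N a)) ∧
          ∀ a : MonoidAlgebra k N, groupAlgCounit k M (f a) = groupAlgCounit k N a})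
        (n : N),
        f.1 (MonoidAlgebra.of k N n) = MonoidAlgebra.of k M (e f n) :=
  diagonalizable_antiequivalence_general k M N
end
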